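/- arXiv:2207.04621 — 4 statements merged into one kernel-verified Lean document; each statement's English description precedes it below -/
import Mathlib

section
/- Suppose Σ is a nonzero Lévy–Khintchine function as in the collision mechanism and Ψ a Lévy–Khintchine function as in the branching mechanism. Then limsup_{u→∞} (−Ψ(u))/Σ(u) > 0 if and only if both limits μ := lim_{u→∞} (−Ψ(u))/u exists in (0,∞) and D := lim_{u→∞} Σ(u)/u exists in (0,∞); in that case limsup_{u→∞} (−Ψ(u))/Σ(u) = lim_{u→∞} (−Ψ(u))/Σ(u) = μ/D, and in particular z* := (limsup_{u→∞} (−Ψ(u))/Σ(u)) ∨ 0 is finite. -/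
/-!
Since `x ↦ exp (-x * h)` is convex, `(exp (-x * h) - 1) / x` is nondecreasing in `x > 0`;
integrating, `Σ(x) / x` is nondecreasing and `-Ψ(x) / x` is nonincreasing on `(0, ∞)`, and
`Σ ≥ 0`. If `-Ψ(u) / Σ(u) > r > 0` for arbitrarily large `u`, then for such `u ≥ v` we get
`-Ψ(v) / v ≥ -Ψ(u) / u > r Σ(u) / u ≥ r Σ(u₀) / u₀ > 0` and
`r Σ(v) / v ≤ r Σ(u) / u < -Ψ(1)` (for `u ≥ 1`),
so both monotone quotients are bounded and converge to positive limits `μ` and `D`.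
Conversely `-Ψ(u) / Σ(u) = (-Ψ(u) / u) / (Σ(u) / u) → μ / D > 0`.
-/

open Set MeasureTheory Filter Topology

lemma exp_neg_sub_one_add_nonneg (t : ℝ) : 0 ≤ Real.exp (-t) - 1 + t := by
  linarith [Real.one_sub_le_exp_neg t]

lemma exp_neg_sub_one_add_le_self {t : ℝ} (ht : 0 ≤ t) : Real.exp (-t) - 1 + t ≤ t := by
  linarith [Real.exp_le_one_iff.mpr (neg_nonpos.mpr ht)]

lemma exp_neg_sub_one_add_le_sq {t : ℝ} (ht : 0 ≤ t) : Real.exp (-t) - 1 + t ≤ t ^ 2 := by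
  have hprod : Real.exp (-t) * (1 + t) ≤ 1 := by
    calc Real.exp (-t) * (1 + t) ≤ Real.exp (-t) * Real.exp t := by
          gcongr; linarith [Real.add_one_le_exp t]
      _ = 1 := by rw [← Real.exp_add, neg_add_cancel, Real.exp_zero]
  nlinarith [Real.one_sub_le_exp_neg t]

lemma monotoneOn_exp_neg_mul_sub_one_add_mul_div (h k : ℝ) :
    MonotoneOn (fun x => (Real.exp (-x * h) - 1 + x * k) / x) (Ioi 0) := by
  have hconv : ConvexOn ℝ univ (fun x : ℝ => Real.exp (-x * h)) := by
    simpa [Function.comp_def, mul_comm] using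
      convexOn_exp.comp_linearMap (LinearMap.lsmul ℝ ℝ (-h))
  have hslope := (hconv.slope_mono (mem_univ 0)).mono
    (fun x (hx : x ∈ Ioi (0:ℝ)) => ⟨mem_univ x, ne_of_gt hx⟩)
  refine (hslope.add_const k).congr fun x (hx : 0 < x) => ?_
  simp only [slope_def_field, sub_zero, neg_mul, zero_mul, neg_zero, Real.exp_zero]
  field_simp

lemma integrableOn_of_lintegral_ofReal_lt_top {ν : Measure ℝ} {s : Set ℝ} {f : ℝ → ℝ}
    (hs : MeasurableSet s) (hf : Measurable f) (hf0 : ∀ x ∈ s, 0 ≤ f x)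
    (hfin : ∫⁻ x in s, ENNReal.ofReal (f x) ∂ν < ⊤) : IntegrableOn f s ν :=
  (lintegral_ofReal_ne_top_iff_integrable hf.aestronglyMeasurable
    (ae_restrict_of_forall_mem hs hf0)).mp hfin.ne

lemma integrableOn_exp_neg_mul_sub_one_add_mul {η : Measure ℝ}
    (hη : IntegrableOn (fun h => min h (h ^ 2)) (Ioi 0) η) {x : ℝ} (hx : 0 ≤ x) :
    IntegrableOn (fun h => Real.exp (-x * h) - 1 + x * h) (Ioi 0) η := by
  refine (hη.const_mul (max x (x ^ 2))).mono' (Continuous.aestronglyMeasurable (by fun_prop)) ?_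
  filter_upwards [self_mem_ae_restrict measurableSet_Ioi] with h (hh : 0 < h)
  have hxh : 0 ≤ x * h := by positivity
  rw [neg_mul, Real.norm_of_nonneg (exp_neg_sub_one_add_nonneg _)]
  rcases le_or_gt h 1 with h1 | h1
  · rw [min_eq_right (by nlinarith)]
    calc _ ≤ (x * h) ^ 2 := exp_neg_sub_one_add_le_sq hxh
      _ = x ^ 2 * h ^ 2 := by ring
      _ ≤ _ := by gcongr; exact le_max_right _ _
  · rw [min_eq_left (by nlinarith)]
    calc _ ≤ x * h := exp_neg_sub_one_add_le_self hxh
      _ ≤ _ := by gcongr; exact le_max_left _ _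

lemma integrableOn_exp_neg_mul_sub_one_add_mul_indicator {π : Measure ℝ}
    (hπ : IntegrableOn (fun h => min 1 (h ^ 2)) (Ioi 0) π) {x : ℝ} (hx : 0 ≤ x) :
    IntegrableOn (fun h => Real.exp (-x * h) - 1 + x * h * (if h ≤ 1 then 1 else 0))
      (Ioi 0) π := by
  refine (hπ.const_mul (max 1 (x ^ 2))).mono' ?_ ?_
  · have hind : Measurable fun h : ℝ => if h ≤ 1 then (1 : ℝ) else 0 :=
      Measurable.ite measurableSet_Iic measurable_const measurable_const
    exact Measurable.aestronglyMeasurable (by fun_prop)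
  filter_upwards [self_mem_ae_restrict measurableSet_Ioi] with h (hh : 0 < h)
  have hxh : 0 ≤ x * h := by positivity
  rcases le_or_gt h 1 with h1 | h1
  · rw [if_pos h1, mul_one, neg_mul, Real.norm_of_nonneg (exp_neg_sub_one_add_nonneg _),
      min_eq_right (by nlinarith)]
    calc _ ≤ (x * h) ^ 2 := exp_neg_sub_one_add_le_sq hxh
      _ = x ^ 2 * h ^ 2 := by ring
      _ ≤ _ := by gcongr; exact le_max_right _ _
  · have hexp : Real.exp (-x * h) ≤ 1 := Real.exp_le_one_iff.mpr (by nlinarith)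
    rw [if_neg h1.not_ge, mul_zero, add_zero, min_eq_left (by nlinarith), mul_one,
      Real.norm_eq_abs, abs_le]
    constructor <;> linarith [Real.exp_pos (-x * h), le_max_left 1 (x ^ 2)]

lemma monotoneOn_setIntegral_div {ν : Measure ℝ} {s : Set ℝ} (hs : MeasurableSet s)
    {F : ℝ → ℝ → ℝ} (hF : ∀ x > 0, IntegrableOn (F x) s ν)
    (hmono : ∀ h ∈ s, MonotoneOn (fun x => F x h / x) (Ioi 0)) :
    MonotoneOn (fun x => (∫ h in s, F x h ∂ν) / x) (Ioi 0) := by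
  intro x (hx : 0 < x) y (hy : 0 < y) hxy
  simp only [← integral_div]
  exact setIntegral_mono_on ((hF x hx).div_const x) ((hF y hy).div_const y) hs
    fun h hh => hmono h hh hx hy hxy

noncomputable def collisionMechanism (a c : ℝ) (η : Measure ℝ) (x : ℝ) : ℝ :=
  a ^ 2 / 2 * x ^ 2 + c / 2 * x + ∫ h in Ioi (0:ℝ), (Real.exp (-x * h) - 1 + x * h) ∂η

noncomputable def branchingMechanism (σ b : ℝ) (π : Measure ℝ) (x : ℝ) : ℝ :=
  σ ^ 2 / 2 * x ^ 2 - b * x +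
    ∫ h in Ioi (0:ℝ), (Real.exp (-x * h) - 1 + x * h * (if h ≤ 1 then 1 else 0)) ∂π

lemma collisionMechanism_nonneg {a c : ℝ} (hc : 0 ≤ c) (η : Measure ℝ) {x : ℝ}
    (hx : 0 ≤ x) : 0 ≤ collisionMechanism a c η x := by
  have hint : 0 ≤ ∫ h in Ioi (0:ℝ), (Real.exp (-x * h) - 1 + x * h) ∂η :=
    setIntegral_nonneg measurableSet_Ioi fun h _ => by
      simpa only [neg_mul] using exp_neg_sub_one_add_nonneg (x * h)
  unfold collisionMechanism
  positivity

lemma monotoneOn_collisionMechanism_div (a c : ℝ) {η : Measure ℝ}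
    (hη : IntegrableOn (fun h => min h (h ^ 2)) (Ioi 0) η) :
    MonotoneOn (fun x => collisionMechanism a c η x / x) (Ioi 0) := by
  have hquad : MonotoneOn (fun x : ℝ => a ^ 2 / 2 * x + c / 2) (Ioi 0) :=
    fun x _ y _ hxy => by dsimp only; gcongr
  have hint := monotoneOn_setIntegral_div measurableSet_Ioi
    (fun x hx => integrableOn_exp_neg_mul_sub_one_add_mul hη hx.le)
    (fun h _ => monotoneOn_exp_neg_mul_sub_one_add_mul_div h h)
  refine (hquad.add hint).congr fun x (hx : 0 < x) => ?_
  simp only [collisionMechanism]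
  field_simp

lemma antitoneOn_neg_branchingMechanism_div (σ b : ℝ) {π : Measure ℝ}
    (hπ : IntegrableOn (fun h => min 1 (h ^ 2)) (Ioi 0) π) :
    AntitoneOn (fun x => -branchingMechanism σ b π x / x) (Ioi 0) := by
  have hquad : AntitoneOn (fun x : ℝ => b - σ ^ 2 / 2 * x) (Ioi 0) :=
    fun x _ y _ hxy => by dsimp only; gcongr
  have hint := monotoneOn_setIntegral_div measurableSet_Ioi
    (fun x hx => integrableOn_exp_neg_mul_sub_one_add_mul_indicator hπ hx.le)
    (fun h _ => by
      simpa only [mul_assoc] using monotoneOn_exp_neg_mul_sub_one_add_mul_div h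
        (h * if h ≤ 1 then 1 else 0))
  refine (hquad.add hint.neg).congr fun x (hx : 0 < x) => ?_
  simp only [branchingMechanism]
  field_simp
  ring

lemma MonotoneOn.exists_tendsto_atTop {g : ℝ → ℝ} (hg : MonotoneOn g (Ioi 0)) {C : ℝ}
    (hC : ∀ x > 0, g x ≤ C) : ∃ D, Tendsto g atTop (𝓝 D) := by
  have hpos : ∀ x : ℝ, max x 1 ∈ Ioi (0:ℝ) := fun x =>
    mem_Ioi.mpr (lt_max_of_lt_right one_pos)
  have hG : Monotone fun x => g (max x 1) := fun x y hxy =>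
    hg (hpos x) (hpos y) (max_le_max_right 1 hxy)
  have hGC : BddAbove (range fun x => g (max x 1)) :=
    ⟨C, by rintro _ ⟨x, rfl⟩; exact hC _ (hpos x)⟩
  refine ⟨_, (tendsto_atTop_ciSup hG hGC).congr' ?_⟩
  filter_upwards [eventually_ge_atTop 1] with x hx
  rw [max_eq_left hx]

lemma AntitoneOn.exists_tendsto_atTop {f : ℝ → ℝ} (hf : AntitoneOn f (Ioi 0)) {C : ℝ}
    (hC : ∀ x > 0, C ≤ f x) : ∃ μ, Tendsto f atTop (𝓝 μ) := by
  obtain ⟨D, hD⟩ := hf.neg.exists_tendsto_atTop (C := -C) fun x hx => neg_le_neg (hC x hx)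
  exact ⟨-D, by simpa using hD.neg⟩

lemma exists_tendsto_of_frequently_lt_div {f g : ℝ → ℝ} (hf : AntitoneOn f (Ioi 0))
    (hg : MonotoneOn g (Ioi 0)) (hg0 : ∀ x > 0, 0 ≤ g x) {r : ℝ} (hr : 0 < r)
    (hfreq : ∃ᶠ x in atTop, r < f x / g x) :
    ∃ μ D, 0 < μ ∧ 0 < D ∧ Tendsto f atTop (𝓝 μ) ∧ Tendsto g atTop (𝓝 D) := by
  have hlarge : ∀ y, ∃ x, y ≤ x ∧ 0 < x ∧ 0 < g x ∧ r * g x < f x := by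
    intro y
    obtain ⟨x, hrx, hyx⟩ := (hfreq.and_eventually (eventually_ge_atTop (max y 1))).exists
    have hx : 0 < x := lt_of_lt_of_le one_pos ((le_max_right y 1).trans hyx)
    -- `f x / 0 = 0` in Lean, so `r < f x / g x` already forces `g x ≠ 0`
    have hgx : 0 < g x := (hg0 x hx).lt_of_ne' fun h => by simp [h] at hrx; linarith
    exact ⟨x, (le_max_left y 1).trans hyx, hx, hgx, (lt_div_iff₀ hgx).mp hrx⟩
  obtain ⟨x₀, -, hx₀, hgx₀, -⟩ := hlarge 0
  have hfbound : ∀ y > 0, r * g x₀ ≤ f y := by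
    intro y hy
    obtain ⟨x, hx, hx0, -, hrx⟩ := hlarge (max y x₀)
    calc r * g x₀ ≤ r * g x := by gcongr; exact hg hx₀ hx0 ((le_max_right y x₀).trans hx)
      _ ≤ f y := hrx.le.trans (hf hy hx0 ((le_max_left y x₀).trans hx))
  have hgbound : ∀ y > 0, g y ≤ f 1 / r := by
    intro y hy
    obtain ⟨x, hx, hx0, -, hrx⟩ := hlarge (max y 1)
    rw [le_div_iff₀' hr]
    calc r * g y ≤ r * g x := by gcongr; exact hg hy hx0 ((le_max_left y 1).trans hx)
      _ ≤ f 1 := hrx.le.trans (hf (mem_Ioi.mpr one_pos) hx0 ((le_max_right y 1).trans hx))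
  obtain ⟨μ, hfμ⟩ := hf.exists_tendsto_atTop hfbound
  obtain ⟨D, hgD⟩ := hg.exists_tendsto_atTop hgbound
  have hμ : r * g x₀ ≤ μ :=
    ge_of_tendsto hfμ ((eventually_gt_atTop 0).mono hfbound)
  have hD : g x₀ ≤ D :=
    ge_of_tendsto hgD ((eventually_ge_atTop x₀).mono fun x hx => hg hx₀ (hx₀.trans_le hx) hx)
  exact ⟨μ, D, (mul_pos hr hgx₀).trans_le hμ, hgx₀.trans_le hD, hfμ, hgD⟩

lemma frequently_lt_of_lt_limsup_of_pos {ι : Type*} {l : Filter ι} {u : ι → ℝ} {b : ℝ}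
    (hpos : 0 < limsup u l) (hb : b < limsup u l) : ∃ᶠ x in l, b < u x := by
  by_cases hco : l.IsCoboundedUnder (· ≤ ·) u
  · exact frequently_lt_of_lt_limsup hco hb
  · rw [Real.limsup_of_not_isCoboundedUnder hco] at hpos
    exact (lt_irrefl 0 hpos).elim

theorem stmt2_general (σ b a c : ℝ) (hc : 0 ≤ c)
    (π η : Measure ℝ)
    (hπ : ∫⁻ h in Ioi (0:ℝ), ENNReal.ofReal (min 1 (h^2)) ∂π < ⊤)
    (hη : ∫⁻ h in Ioi (0:ℝ), ENNReal.ofReal (min h (h^2)) ∂η < ⊤)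
    (Psi Sig : ℝ → ℝ)
    (hPsi : ∀ x, Psi x = σ^2/2 * x^2 - b*x +
      ∫ h in Ioi (0:ℝ), (Real.exp (-x*h) - 1 + x*h * (if h ≤ 1 then 1 else 0)) ∂π)
    (hSig : ∀ x, Sig x = a^2/2 * x^2 + c/2 * x +
      ∫ h in Ioi (0:ℝ), (Real.exp (-x*h) - 1 + x*h) ∂η) :
    (0 < limsup (fun u => (-Psi u) / Sig u) atTop ↔
      ∃ μ D : ℝ, 0 < μ ∧ 0 < D ∧
        Tendsto (fun u => (-Psi u) / u) atTop (nhds μ) ∧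
        Tendsto (fun u => Sig u / u) atTop (nhds D)) ∧
    (∀ μ D : ℝ, 0 < μ → 0 < D →
      Tendsto (fun u => (-Psi u) / u) atTop (nhds μ) →
      Tendsto (fun u => Sig u / u) atTop (nhds D) →
        limsup (fun u => (-Psi u) / Sig u) atTop = μ / D ∧
        Tendsto (fun u => (-Psi u) / Sig u) atTop (nhds (μ / D))) := by
  obtain rfl : Psi = branchingMechanism σ b π := funext hPsi
  obtain rfl : Sig = collisionMechanism a c η := funext hSig
  have hf := antitoneOn_neg_branchingMechanism_div σ b <|
    integrableOn_of_lintegral_ofReal_lt_top measurableSet_Ioi (by fun_prop)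
      (fun h _ => by positivity) hπ
  have hg := monotoneOn_collisionMechanism_div a c <|
    integrableOn_of_lintegral_ofReal_lt_top measurableSet_Ioi (by fun_prop)
      (fun h (hh : 0 < h) => by positivity) hη
  have hratio : (fun u => -branchingMechanism σ b π u / collisionMechanism a c η u) =ᶠ[atTop]
      fun u => (-branchingMechanism σ b π u / u) / (collisionMechanism a c η u / u) := by
    filter_upwards [eventually_ne_atTop 0] with u hu
    rw [div_div_div_cancel_right₀ hu]
  have hlim : ∀ μ D, D ≠ 0 →
      Tendsto (fun u => -branchingMechanism σ b π u / u) atTop (𝓝 μ) →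
      Tendsto (fun u => collisionMechanism a c η u / u) atTop (𝓝 D) →
      Tendsto (fun u => -branchingMechanism σ b π u / collisionMechanism a c η u) atTop
        (𝓝 (μ / D)) :=
    fun μ D hD hfμ hgD => (hfμ.div hgD hD).congr' hratio.symm
  refine ⟨⟨fun hL => ?_, ?_⟩, fun μ D _ hD hfμ hgD =>
    ⟨(hlim μ D hD.ne' hfμ hgD).limsup_eq, hlim μ D hD.ne' hfμ hgD⟩⟩
  · refine exists_tendsto_of_frequently_lt_div hf hg
      (fun x hx => div_nonneg (collisionMechanism_nonneg hc η hx.le) hx.le) (half_pos hL) ?_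
    exact ((frequently_lt_of_lt_limsup_of_pos hL (half_lt_self hL)).and_eventually hratio).mono
      fun u ⟨hlt, heq⟩ => hlt.trans_eq heq
  · rintro ⟨μ, D, hμ, hD, hfμ, hgD⟩
    rw [(hlim μ D hD.ne' hfμ hgD).limsup_eq]
    positivity

/-- `limsup_{u→∞} (−Ψ u)/Σ u > 0` iff both `(−Ψ u)/u → μ ∈ (0,∞)` and `Σ u / u → D ∈ (0,∞)`;
in that case the limsup is in fact a limit and equals `μ/D`. -/
theorem stmt2 (σ b a c : ℝ) (hσ : 0 ≤ σ) (ha : 0 ≤ a) (hc : 0 ≤ c)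
    (π η : Measure ℝ)
    (hπ : ∫⁻ h in Ioi (0:ℝ), ENNReal.ofReal (min 1 (h^2)) ∂π < ⊤)
    (hη : ∫⁻ h in Ioi (0:ℝ), ENNReal.ofReal (min h (h^2)) ∂η < ⊤)
    (Psi Sig : ℝ → ℝ)
    (hPsi : ∀ x, Psi x = σ^2/2 * x^2 - b*x +
      ∫ h in Ioi (0:ℝ), (Real.exp (-x*h) - 1 + x*h * (if h ≤ 1 then 1 else 0)) ∂π)
    (hSig : ∀ x, Sig x = a^2/2 * x^2 + c/2 * x +
      ∫ h in Ioi (0:ℝ), (Real.exp (-x*h) - 1 + x*h) ∂η)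
    (hSne : ∃ x > (0:ℝ), Sig x ≠ 0) :
    (0 < limsup (fun u => (-Psi u) / Sig u) atTop ↔
      ∃ μ D : ℝ, 0 < μ ∧ 0 < D ∧
        Tendsto (fun u => (-Psi u) / u) atTop (nhds μ) ∧
        Tendsto (fun u => Sig u / u) atTop (nhds D)) ∧
    (∀ μ D : ℝ, 0 < μ → 0 < D →
      Tendsto (fun u => (-Psi u) / u) atTop (nhds μ) →
      Tendsto (fun u => Sig u / u) atTop (nhds D) →
        limsup (fun u => (-Psi u) / Sig u) atTop = μ / D ∧
        Tendsto (fun u => (-Psi u) / Sig u) atTop (nhds (μ / D))) :=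
  stmt2_general σ b a c hc π η hπ hη Psi Sig hPsi hSig
end

section
/- In the setting of the previous statement (Ψ positive nondecreasing on [x₀,∞), Q(u) = ∫_{x₀}^u Ψ/Σ, φ(u) = ∫_u^∞ e^{−Q}/Σ, Q(∞)=∞, φ(x₀)<∞), one has the identity (e^{Q(u)}φ(u))' = (Ψ(u)e^{Q(u)}φ(u) − 1)/Σ(u) ≤ 0, and consequently ∫_{x₀}^x φ(u)e^{Q(u)} du ≤ ∫_{x₀}^x du/Ψ(u) for every x ≥ x₀. In particular if ∫_{x₀}^∞ du/Ψ(u) < ∞ (Grey's condition) then ∫_{x₀}^∞ φ(u)e^{Q(u)} du < ∞. -/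
open Set MeasureTheory Filter

/-- `Q(u) := ∫_{x₀}^u Ψ/Σ` -/
noncomputable def Qf (Sig Psi : ℝ → ℝ) (x₀ u : ℝ) : ℝ := ∫ v in x₀..u, Psi v / Sig v

/-- `φ(u) := ∫_u^∞ (1/Σ(x)) e^{−Q(x)} dx` -/
noncomputable def phif (Sig Psi : ℝ → ℝ) (x₀ u : ℝ) : ℝ :=
  ∫ x in Set.Ioi u, (1 / Sig x) * Real.exp (-(Qf Sig Psi x₀ x))

/-!
Everything rests on the pointwise bound `Ψ(u) e^{Q(u)} φ(u) ≤ 1`. Since `Q → ∞`, the fundamental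
theorem of calculus on `(u, ∞)` gives `e^{-Q(u)} = ∫_u^∞ Ψ e^{-Q}/Σ`, and as `Ψ` is nondecreasing,
`Ψ(u) φ(u) = ∫_u^∞ Ψ(u) e^{-Q}/Σ ≤ e^{-Q(u)}`. This is the sign of `(e^Q φ)'`, and divided by
`Ψ(u)` it is the bound `φ e^Q ≤ 1/Ψ`, which integrates to the comparison and to Grey's criterion.
-/

open Topology

section Primitive

variable {f : ℝ → ℝ} {a u : ℝ}

theorem ContinuousOn.hasDerivWithinAt_intervalIntegral_Ici (hf : ContinuousOn f (Ici a))
    (hu : a ≤ u) : HasDerivWithinAt (fun y => ∫ x in a..y, f x) (f u) (Ici a) u := by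
  have hg : Continuous fun x => f (max a x) :=
    hf.comp_continuous (continuous_const.max continuous_id) fun x => le_max_left a x
  have hint : ∀ y ∈ Ici a, ∫ x in a..y, f (max a x) = ∫ x in a..y, f x := fun y hy =>
    intervalIntegral.integral_congr fun x hx => by
      rw [uIcc_of_le hy] at hx
      rw [max_eq_right hx.1]
  have hderiv := (hg.integral_hasStrictDerivAt a u).hasDerivAt.hasDerivWithinAt (s := Ici a)
  rw [max_eq_right hu] at hderiv
  exact hderiv.congr (fun y hy => (hint y hy).symm) (hint u hu).symm

theorem MeasureTheory.IntegrableOn.hasDerivAt_setIntegral_Ioi (hf : IntegrableOn f (Ioi a))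
    (hu : a < u) (hfu : ContinuousAt f u) : HasDerivAt (fun y => ∫ x in Ioi y, f x) (-f u) u := by
  have hprim : HasDerivAt (fun y => ∫ x in a..y, f x) (f u) u :=
    intervalIntegral.integral_hasDerivAt_right
      ((intervalIntegrable_iff_integrableOn_Ioc_of_le hu.le).2 (hf.mono_set Ioc_subset_Ioi_self))
      ⟨Ioi a, Ioi_mem_nhds hu, hf.aestronglyMeasurable⟩ hfu
  refine (hprim.const_sub (∫ x in Ioi a, f x)).congr_of_eventuallyEq ?_
  filter_upwards [Ioi_mem_nhds hu] with y hy
  rw [← intervalIntegral.integral_Ioi_sub_Ioi hf hy.le, sub_sub_cancel]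

end Primitive

section TailIntegral

variable {Sig Psi : ℝ → ℝ} {x₀ u : ℝ}

theorem phif_nonneg (hSpos : ∀ x ≥ x₀, 0 < Sig x) (hu : x₀ ≤ u) : 0 ≤ phif Sig Psi x₀ u :=
  setIntegral_nonneg measurableSet_Ioi fun x hx =>
    mul_nonneg (one_div_nonneg.2 (hSpos x (hu.trans hx.out.le)).le) (Real.exp_nonneg _)

theorem hasDerivWithinAt_neg_exp_neg_Qf (hf : ContinuousOn (fun v => Psi v / Sig v) (Ici x₀))
    (hu : x₀ ≤ u) :
    HasDerivWithinAt (fun y => -Real.exp (-Qf Sig Psi x₀ y))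
      (Real.exp (-Qf Sig Psi x₀ u) * (Psi u / Sig u)) (Ici x₀) u := by
  refine (hf.hasDerivWithinAt_intervalIntegral_Ici hu).neg.exp.neg.congr_deriv ?_
  simp only [Pi.neg_apply, Qf]
  ring

theorem psi_mul_exp_Qf_mul_phif_le_one (hf : ContinuousOn (fun v => Psi v / Sig v) (Ici x₀))
    (hSpos : ∀ x ≥ x₀, 0 < Sig x) (hPnonneg : ∀ x ≥ x₀, 0 ≤ Psi x)
    (hPmono : MonotoneOn Psi (Ici x₀)) (hQ : Tendsto (Qf Sig Psi x₀) atTop atTop)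
    (hφ : IntegrableOn (fun x => 1 / Sig x * Real.exp (-Qf Sig Psi x₀ x)) (Ioi x₀))
    (hu : x₀ ≤ u) : Psi u * Real.exp (Qf Sig Psi x₀ u) * phif Sig Psi x₀ u ≤ 1 := by
  set Q := Qf Sig Psi x₀
  have hderiv (x : ℝ) (hx : x ∈ Ioi u) :
      HasDerivAt (fun y => -Real.exp (-Q y)) (Real.exp (-Q x) * (Psi x / Sig x)) x :=
    (hasDerivWithinAt_neg_exp_neg_Qf hf (hu.trans hx.out.le)).hasDerivAt
      (Ici_mem_nhds (hu.trans_lt hx))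
  have hcont : ContinuousWithinAt (fun y => -Real.exp (-Q y)) (Ici u) u :=
    (hasDerivWithinAt_neg_exp_neg_Qf hf hu).continuousWithinAt.mono (Ici_subset_Ici.2 hu)
  have hderiv_nonneg (x : ℝ) (hx : x ∈ Ioi u) : 0 ≤ Real.exp (-Q x) * (Psi x / Sig x) :=
    have hx₀ : x₀ ≤ x := hu.trans hx.out.le
    mul_nonneg (Real.exp_nonneg _) (div_nonneg (hPnonneg x hx₀) (hSpos x hx₀).le)
  have hlim : Tendsto (fun y => -Real.exp (-Q y)) atTop (𝓝 0) := by
    simpa using (Real.tendsto_exp_atBot.comp (tendsto_neg_atTop_atBot.comp hQ)).neg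
  have hphi : Psi u * phif Sig Psi x₀ u ≤ Real.exp (-Q u) := calc
    Psi u * phif Sig Psi x₀ u = ∫ x in Ioi u, Psi u * (1 / Sig x * Real.exp (-Q x)) :=
        (integral_const_mul _ _).symm
    _ ≤ ∫ x in Ioi u, Real.exp (-Q x) * (Psi x / Sig x) := by
      refine setIntegral_mono_on ((hφ.mono_set (Ioi_subset_Ioi hu)).const_mul _)
        (integrableOn_Ioi_deriv_of_nonneg hcont hderiv hderiv_nonneg hlim) measurableSet_Ioi
        fun x hx => ?_
      have hx₀ : x₀ ≤ x := hu.trans hx.out.le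
      have hweight : 0 ≤ 1 / Sig x * Real.exp (-Q x) :=
        mul_nonneg (one_div_nonneg.2 (hSpos x hx₀).le) (Real.exp_nonneg _)
      calc Psi u * (1 / Sig x * Real.exp (-Q x))
          ≤ Psi x * (1 / Sig x * Real.exp (-Q x)) :=
            mul_le_mul_of_nonneg_right (hPmono hu hx₀ hx.out.le) hweight
        _ = Real.exp (-Q x) * (Psi x / Sig x) := by ring
    _ = Real.exp (-Q u) := by
      rw [integral_Ioi_of_hasDerivAt_of_nonneg hcont hderiv hderiv_nonneg hlim]
      ring
  calc Psi u * Real.exp (Q u) * phif Sig Psi x₀ u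
      = Real.exp (Q u) * (Psi u * phif Sig Psi x₀ u) := by ring
    _ ≤ Real.exp (Q u) * Real.exp (-Q u) := mul_le_mul_of_nonneg_left hphi (Real.exp_nonneg _)
    _ = 1 := by rw [← Real.exp_add, add_neg_cancel, Real.exp_zero]

theorem continuousOn_phif_mul_exp_Qf (hf : ContinuousOn (fun v => Psi v / Sig v) (Ici x₀))
    (hφ : IntegrableOn (fun x => 1 / Sig x * Real.exp (-Qf Sig Psi x₀ x)) (Ioi x₀)) :
    ContinuousOn (fun u => phif Sig Psi x₀ u * Real.exp (Qf Sig Psi x₀ u)) (Ici x₀) :=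
  hφ.continuousOn_Ici_primitive_Ioi.mul fun _ hu =>
    (hf.hasDerivWithinAt_intervalIntegral_Ici hu).continuousWithinAt.rexp

theorem hasDerivAt_exp_Qf_mul_phif (hf : ContinuousOn (fun v => Psi v / Sig v) (Ici x₀))
    (hSu : ContinuousAt Sig u) (hSu₀ : Sig u ≠ 0)
    (hφ : IntegrableOn (fun x => 1 / Sig x * Real.exp (-Qf Sig Psi x₀ x)) (Ioi x₀))
    (hu : x₀ < u) :
    HasDerivAt (fun y => Real.exp (Qf Sig Psi x₀ y) * phif Sig Psi x₀ y)
      ((Psi u * Real.exp (Qf Sig Psi x₀ u) * phif Sig Psi x₀ u - 1) / Sig u) u := by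
  have hQ : HasDerivAt (Qf Sig Psi x₀) (Psi u / Sig u) u :=
    (hf.hasDerivWithinAt_intervalIntegral_Ici hu.le).hasDerivAt (Ici_mem_nhds hu)
  have hphi : HasDerivAt (phif Sig Psi x₀) (-(1 / Sig u * Real.exp (-Qf Sig Psi x₀ u))) u :=
    hφ.hasDerivAt_setIntegral_Ioi hu
      ((continuousAt_const.div hSu hSu₀).mul hQ.continuousAt.neg.rexp)
  refine (hQ.exp.mul hphi).congr_deriv ?_
  rw [Real.exp_neg]
  field_simp
  ring

end TailIntegral

/-- The identity `(e^{Q}φ)' = (Ψ e^{Q} φ − 1)/Σ ≤ 0`, the comparison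
`∫_{x₀}^x φ e^{Q} ≤ ∫_{x₀}^x du/Ψ(u)`, and the consequence that Grey's condition
`∫_{x₀}^∞ du/Ψ(u) < ∞` implies `∫_{x₀}^∞ φ e^{Q} du < ∞`. -/
theorem stmt7 (Sig Psi : ℝ → ℝ) (x₀ : ℝ)
    (hScont : ContinuousOn Sig (Ici x₀)) (hPcont : ContinuousOn Psi (Ici x₀))
    (hSpos : ∀ x ≥ x₀, 0 < Sig x) (hPpos : ∀ x ≥ x₀, 0 < Psi x)
    (hPmono : MonotoneOn Psi (Ici x₀))
    (hQ : Tendsto (fun u => Qf Sig Psi x₀ u) atTop atTop)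
    (hφ : IntegrableOn (fun x => (1 / Sig x) * Real.exp (-(Qf Sig Psi x₀ x))) (Ioi x₀)) :
    (∀ u ∈ Ioi x₀,
      HasDerivAt (fun y => Real.exp (Qf Sig Psi x₀ y) * phif Sig Psi x₀ y)
        ((Psi u * Real.exp (Qf Sig Psi x₀ u) * phif Sig Psi x₀ u - 1) / Sig u) u) ∧
    (∀ u ≥ x₀,
      (Psi u * Real.exp (Qf Sig Psi x₀ u) * phif Sig Psi x₀ u - 1) / Sig u ≤ 0) ∧
    (∀ x ≥ x₀,
      (∫ u in x₀..x, phif Sig Psi x₀ u * Real.exp (Qf Sig Psi x₀ u))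
        ≤ ∫ u in x₀..x, 1 / Psi u) ∧
    (IntegrableOn (fun u => 1 / Psi u) (Ioi x₀) →
      IntegrableOn (fun u => phif Sig Psi x₀ u * Real.exp (Qf Sig Psi x₀ u)) (Ioi x₀)) := by
  have hf : ContinuousOn (fun v => Psi v / Sig v) (Ici x₀) :=
    hPcont.div hScont fun x hx => (hSpos x hx).ne'
  have hbound (u : ℝ) (hu : x₀ ≤ u) :
      Psi u * Real.exp (Qf Sig Psi x₀ u) * phif Sig Psi x₀ u ≤ 1 :=
    psi_mul_exp_Qf_mul_phif_le_one hf hSpos (fun x hx => (hPpos x hx).le) hPmono hQ hφ hu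
  have hle (u : ℝ) (hu : x₀ ≤ u) :
      phif Sig Psi x₀ u * Real.exp (Qf Sig Psi x₀ u) ≤ 1 / Psi u := by
    rw [le_div_iff₀ (hPpos u hu)]
    linarith [hbound u hu]
  have hcont := continuousOn_phif_mul_exp_Qf hf hφ
  refine ⟨fun u hu => hasDerivAt_exp_Qf_mul_phif hf (hScont.continuousAt (Ici_mem_nhds hu))
      (hSpos u hu.le).ne' hφ hu,
    fun u hu => div_nonpos_of_nonpos_of_nonneg (sub_nonpos.2 (hbound u hu)) (hSpos u hu).le,
    fun x hx => ?_, fun hΨ => ?_⟩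
  · exact intervalIntegral.integral_mono_on hx
      ((hcont.mono Icc_subset_Ici_self).intervalIntegrable_of_Icc hx)
      ((continuousOn_const.div hPcont fun u hu => (hPpos u hu).ne').mono
        Icc_subset_Ici_self |>.intervalIntegrable_of_Icc hx)
      fun u hu => hle u hu.1
  · refine hΨ.mono' ((hcont.mono Ioi_subset_Ici_self).aestronglyMeasurable measurableSet_Ioi) ?_
    filter_upwards [self_mem_ae_restrict measurableSet_Ioi] with u hu
    rw [Real.norm_of_nonneg (mul_nonneg (phif_nonneg hSpos hu.out.le) (Real.exp_nonneg _))]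
    exact hle u hu.out.le
end

section
/- Let Σ : (0,∞) → (0,∞) be continuous, convex extendable with Σ(0)=0, and let Ψ : (0,∞) → ℝ be continuous and satisfy Ψ(u) ≥ γu for all u ≥ u₀, for some γ < 0 and u₀ > 0. Then J := ∫_{x₀}^∞ (1/Σ(x)) ∫_x^∞ exp(∫_x^y Ψ(u)/Σ(u) du) dy dx = ∞ for any x₀ ≥ u₀. -/
open Set MeasureTheory
open scoped ENNReal

/-- Feller's test: with `Σ` convex, `Σ(0)=0`, positive and continuous on `(0,∞)`, and
`Ψ(u) ≥ γ u` (`γ < 0`) for `u ≥ u₀`, the integral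
`J = ∫_{x₀}^∞ (1/Σ(x)) ∫_x^∞ exp(∫_x^y Ψ/Σ) dy dx` is infinite for any `x₀ ≥ u₀`. -/
theorem stmt9 (Sig Psi : ℝ → ℝ) (γ u₀ : ℝ)
    (hScont : ContinuousOn Sig (Ioi 0)) (hSpos : ∀ x : ℝ, 0 < x → 0 < Sig x)
    (hconv : ConvexOn ℝ (Ici 0) Sig) (hS0 : Sig 0 = 0)
    (hPcont : ContinuousOn Psi (Ioi 0))
    (hγ : γ < 0) (hu₀ : 0 < u₀) (hPsi : ∀ u ≥ u₀, γ * u ≤ Psi u) :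
    ∀ x₀ ≥ u₀,
      ∫⁻ x in Ioi x₀, ENNReal.ofReal (1 / Sig x) *
        ∫⁻ y in Ioi x, ENNReal.ofReal (Real.exp (∫ u in x..y, Psi u / Sig u)) = ⊤ := by
  intro x₀ hx₀
  have hx₀pos : 0 < x₀ := lt_of_lt_of_le hu₀ hx₀
  -- pointwise lower bound for the integrand
  have key : ∀ x ∈ Ioi x₀, ENNReal.ofReal ((-γ)⁻¹ * x⁻¹) ≤
      ENNReal.ofReal (1 / Sig x) *
        ∫⁻ y in Ioi x, ENNReal.ofReal (Real.exp (∫ u in x..y, Psi u / Sig u)) := by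
    intro x hx
    have hxpos : 0 < x := hx₀pos.trans hx
    have hxu : u₀ ≤ x := hx₀.trans hx.le
    have hSx : 0 < Sig x := hSpos x hxpos
    set c := γ * x / Sig x with hcdef
    have hc : c < 0 := div_neg_of_neg_of_pos (mul_neg_of_neg_of_pos hγ hxpos) hSx
    -- pointwise comparison of the exponents
    have hpt : ∀ y ∈ Ioi x, ENNReal.ofReal (Real.exp (c * (y - x))) ≤
        ENNReal.ofReal (Real.exp (∫ u in x..y, Psi u / Sig u)) := by
      intro y hy
      have hxy : x ≤ y := le_of_lt hy
      have hsub : Icc x y ⊆ Ioi 0 := fun u hu => lt_of_lt_of_le hxpos hu.1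
      have hcont : ContinuousOn (fun u => Psi u / Sig u) (Icc x y) :=
        (hPcont.mono hsub).div (hScont.mono hsub) fun u hu => (hSpos u (hsub hu)).ne'
      have hii : IntervalIntegrable (fun u => Psi u / Sig u) volume x y :=
        hcont.intervalIntegrable_of_Icc hxy
      have hle : ∀ u ∈ Icc x y, c ≤ Psi u / Sig u := by
        intro u hu
        have hupos : 0 < u := hsub hu
        have hSu : 0 < Sig u := hSpos u hupos
        have h1 : γ * u / Sig u ≤ Psi u / Sig u :=
          by gcongr; exact hPsi u (hxu.trans hu.1)
        have hslope : Sig x / x ≤ Sig u / u := by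
          have := hconv.secant_mono (a := 0) (x := x) (y := u)
            (self_mem_Ici) hxpos.le hupos.le hxpos.ne' hupos.ne' hu.1
          simpa [hS0] using this
        have h2 : γ * x / Sig x ≤ γ * u / Sig u := by
          rw [div_le_div_iff₀ hxpos hupos] at hslope
          rw [div_le_div_iff₀ hSx hSu]
          nlinarith [hslope, hγ.le]
        exact le_trans h2 h1
      have hint : c * (y - x) ≤ ∫ u in x..y, Psi u / Sig u := by
        have := intervalIntegral.integral_mono_on hxy intervalIntegrable_const hii hle
        rw [intervalIntegral.integral_const, smul_eq_mul, mul_comm] at this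
        exact this
      exact ENNReal.ofReal_le_ofReal (Real.exp_le_exp.mpr hint)
    have hmono : ∫⁻ y in Ioi x, ENNReal.ofReal (Real.exp (c * (y - x))) ≤
        ∫⁻ y in Ioi x, ENNReal.ofReal (Real.exp (∫ u in x..y, Psi u / Sig u)) :=
      lintegral_mono_ae ((ae_restrict_iff' measurableSet_Ioi).2 (ae_of_all _ hpt))
    -- evaluate the lower integral
    have hintOn : IntegrableOn (fun y => Real.exp (c * (y - x))) (Ioi x) := by
      have h := (exp_neg_integrableOn_Ioi x (neg_pos.mpr hc)).const_mul (Real.exp (-(c * x)))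
      refine (integrableOn_congr_fun (fun y hy => ?_) measurableSet_Ioi).mpr h
      rw [← Real.exp_add]; ring_nf
    have hval : ∫⁻ y in Ioi x, ENNReal.ofReal (Real.exp (c * (y - x))) =
        ENNReal.ofReal ((-c)⁻¹) := by
      rw [← ofReal_integral_eq_lintegral_ofReal hintOn
        (ae_of_all _ fun y => (Real.exp_pos _).le)]
      congr 1
      have hb : (0:ℝ) < -c := neg_pos.mpr hc
      have heq : ∫ y in Ioi x, Real.exp (c * (y - x)) =
          ∫ y in Ioi x, Real.exp (-(c * x)) * Real.exp (-(-c * y)) := by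
        refine setIntegral_congr_fun measurableSet_Ioi (fun y hy => ?_)
        rw [← Real.exp_add]; ring_nf
      rw [heq, MeasureTheory.integral_const_mul]
      have h2 := integral_comp_mul_left_Ioi (fun t => Real.exp (-t)) x hb
      simp only [smul_eq_mul] at h2
      rw [show (fun y => Real.exp (-(-c * y))) = (fun y => (fun t => Real.exp (-t)) (-c * y))
        from rfl, h2, integral_exp_neg_Ioi, ← mul_assoc, mul_comm (Real.exp _), mul_assoc,
        ← Real.exp_add]
      norm_num
    calc ENNReal.ofReal ((-γ)⁻¹ * x⁻¹)
        = ENNReal.ofReal (1 / Sig x) * ENNReal.ofReal ((-c)⁻¹) := by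
          rw [← ENNReal.ofReal_mul (by positivity)]
          congr 1
          rw [hcdef]
          field_simp
      _ ≤ ENNReal.ofReal (1 / Sig x) *
            ∫⁻ y in Ioi x, ENNReal.ofReal (Real.exp (∫ u in x..y, Psi u / Sig u)) := by
          exact mul_le_mul_right (hval ▸ hmono) _
  -- the lower bound integral diverges
  have houter : ∫⁻ x in Ioi x₀, ENNReal.ofReal ((-γ)⁻¹ * x⁻¹) = ⊤ := by
    have hγ' : (0:ℝ) < (-γ)⁻¹ := inv_pos.mpr (neg_pos.mpr hγ)
    simp_rw [ENNReal.ofReal_mul hγ'.le]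
    rw [lintegral_const_mul' _ _ ENNReal.ofReal_ne_top]
    have hinv : ∫⁻ x in Ioi x₀, ENNReal.ofReal x⁻¹ = ⊤ := by
      by_contra h
      have hmeas : AEStronglyMeasurable (fun x : ℝ => x⁻¹) (volume.restrict (Ioi x₀)) :=
        measurable_inv.aestronglyMeasurable
      have hnn : 0 ≤ᵐ[volume.restrict (Ioi x₀)] fun x : ℝ => x⁻¹ :=
        (ae_restrict_iff' measurableSet_Ioi).2
          (ae_of_all _ fun x hx => inv_nonneg.mpr (hx₀pos.trans hx).le)
      have : IntegrableOn (fun x : ℝ => x⁻¹) (Ioi x₀) :=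
        ⟨hmeas, (hasFiniteIntegral_iff_ofReal hnn).2 (lt_top_iff_ne_top.2 h)⟩
      exact not_IntegrableOn_Ioi_inv this
    rw [hinv, ENNReal.mul_top]
    exact (ENNReal.ofReal_pos.mpr hγ').ne'
  refine top_unique ?_
  rw [← houter]
  exact lintegral_mono_ae ((ae_restrict_iff' measurableSet_Ioi).2 (ae_of_all _ key))
end

section
/- Fix θ > 0, c̄ > 0. Let Σ : [c̄,∞) → (0,∞) be continuous and nondecreasing, Ψ : [c̄,∞) → ℝ continuous, and suppose A := (sup_{u≥c̄} (−Ψ(u))/Σ(u)) ∨ 0 < ∞. Let h ∈ C²([c̄,∞)) be nondecreasing and solve (Σh')' + Ψh' = θh on [c̄,∞). Then g := Σh' satisfies g' ≤ A·g + (θ/Σ(c̄)) ∫_{c̄}^{·} g + θ h(c̄), and consequently h'(x) ≤ Σ(c̄)^{−1} g̃(x) for all x ≥ c̄, where g̃ is the solution of g̃'' = A g̃' + (θ/Σ(c̄)) g̃ with g̃(c̄) = g(c̄)+1, g̃'(c̄) = A g̃(c̄) + θ h(c̄); in particular h' grows at most exponentially with rate A + √(θ/Σ(c̄)), so that ∫₀^∞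 e^{−zv} h(v) dv < ∞ for every z > A + √(θ/Σ(c̄)). -/
/-!
Since `h` is nondecreasing, `h' ≥ 0`; integrating the equation and using `Σ ≥ Σ(c̄)` and
`-Ψ ≤ A Σ` gives the integro-differential inequality for `g = Σ h'`. The explicit solution `g̃`
of `g̃'' = A g̃' + (θ/Σ(c̄)) g̃` satisfies the same relation with equality, so `ζ = g̃ - g` has
`ζ(c̄) = 1` and `ζ' ≥ A ζ + (θ/Σ(c̄)) ∫ ζ`. Up to a first zero of `ζ` the integral term is
nonnegative, so `e^{-A x} ζ` is nondecreasing there and cannot reach zero. The roots of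
`λ² = A λ + θ/Σ(c̄)` are at most `A + √(θ/Σ(c̄))`, which bounds `g̃`, hence `h'` and `h`,
exponentially.
-/

open Set MeasureTheory Filter Real intervalIntegral

lemma HasDerivAt.nonneg_of_monotoneOn_Ici {f : ℝ → ℝ} {f' x : ℝ} (hd : HasDerivAt f f' x)
    (hf : MonotoneOn f (Ici x)) : 0 ≤ f' :=
  hd.hasDerivWithinAt.nonneg_of_monotoneOn
    (by rw [accPt_principal_iff_nhdsWithin, Ici_sdiff_left]; infer_instance) hf

lemma sub_le_integral_mul_div {σ f f' : ℝ → ℝ} {c x : ℝ} (hcx : c ≤ x)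
    (hσ : MonotoneOn σ (Ici c)) (hσc : 0 < σ c) (hf : ∀ y ≥ c, HasDerivAt f (f' y) y)
    (hf' : ∀ y ≥ c, 0 ≤ f' y) (hσf' : ContinuousOn (fun y => σ y * f' y) (Icc c x)) :
    f x - f c ≤ (∫ u in c..x, σ u * f' u) / σ c := by
  rw [← intervalIntegral.integral_div]
  refine sub_le_integral_of_hasDeriv_right_of_le hcx
    (HasDerivAt.continuousOn fun y hy => hf y hy.1)
    (fun y hy => (hf y hy.1.le).hasDerivWithinAt)
    ((hσf'.div_const _).integrableOn_Icc) fun y hy => ?_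
  rw [le_div_iff₀ hσc, mul_comm]
  exact mul_le_mul_of_nonneg_right (hσ self_mem_Ici hy.1.le hy.1.le) (hf' y hy.1.le)

lemma exists_first_nonpos {f : ℝ → ℝ} {a b : ℝ} (hab : a ≤ b) (hf : ContinuousOn f (Icc a b))
    (ha : 0 < f a) (hb : f b ≤ 0) : ∃ t ∈ Ioc a b, f t ≤ 0 ∧ ∀ y ∈ Ico a t, 0 < f y := by
  have hS : IsCompact (Icc a b ∩ f ⁻¹' Iic 0) := isCompact_Icc.of_isClosed_subset
    (hf.preimage_isClosed_of_isClosed isClosed_Icc isClosed_Iic) inter_subset_left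
  obtain ⟨⟨hat, htb⟩, ht⟩ := hS.sInf_mem ⟨b, ⟨hab, le_rfl⟩, hb⟩
  refine ⟨_, ⟨hat.lt_of_ne fun hta => ?_, htb⟩, ht, fun y hy => ?_⟩
  · exact (ht : f _ ≤ 0).not_gt (hta ▸ ha)
  · by_contra! hy0
    exact hy.2.not_ge (csInf_le hS.bddBelow ⟨⟨hy.1, hy.2.le.trans htb⟩, hy0⟩)

lemma pos_of_le_deriv_add_integral {ζ ζ' : ℝ → ℝ} {A B c : ℝ} (hB : 0 ≤ B)
    (hd : ∀ y ≥ c, HasDerivAt ζ (ζ' y) y) (hc : 0 < ζ c)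
    (hζ' : ∀ y ≥ c, A * ζ y + B * ∫ u in c..y, ζ u ≤ ζ' y) : ∀ x ≥ c, 0 < ζ x := by
  intro x hx
  by_contra! hx0
  obtain ⟨t, ⟨hct, -⟩, ht0, hpos⟩ :=
    exists_first_nonpos hx (HasDerivAt.continuousOn fun y hy => hd y hy.1) hc hx0
  have hw : ∀ y ≥ c, HasDerivAt (fun y => exp (-A * y) * ζ y)
      (exp (-A * y) * (ζ' y - A * ζ y)) y := fun y hy => by
    have he : HasDerivAt (fun y => exp (-A * y)) (exp (-A * y) * -A) y := by
      simpa using ((hasDerivAt_id y).const_mul (-A)).exp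
    exact (he.mul (hd y hy)).congr_deriv (by ring)
  -- `ζ > 0` on `[c, t)` makes the memory term nonnegative, so `ζ' ≥ A ζ` there.
  have hmono : MonotoneOn (fun y => exp (-A * y) * ζ y) (Icc c t) := by
    refine monotoneOn_of_hasDerivWithinAt_nonneg (convex_Icc c t)
      (HasDerivAt.continuousOn fun y hy => hw y hy.1)
      (fun y hy => (hw y (interior_subset hy).1).hasDerivWithinAt) fun y hy => ?_
    rw [interior_Icc] at hy
    have hint : 0 ≤ ∫ u in c..y, ζ u :=
      integral_nonneg hy.1.le fun u hu => (hpos u ⟨hu.1, hu.2.trans_lt hy.2⟩).le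
    have := hζ' y hy.1.le
    exact mul_nonneg (exp_pos _).le (by nlinarith)
  have := hmono ⟨le_rfl, hct.le⟩ ⟨hct.le, le_rfl⟩ hct.le
  simp only at this
  nlinarith [exp_pos (-A * c), exp_pos (-A * t)]

lemma lt_of_deriv_le_integral {g g' G G' : ℝ → ℝ} {A B C c : ℝ} (hB : 0 ≤ B)
    (hg : ∀ x ≥ c, HasDerivAt g (g' x) x) (hG : ∀ x ≥ c, HasDerivAt G (G' x) x)
    (hc : g c < G c) (hg' : ∀ x ≥ c, g' x ≤ A * g x + B * (∫ u in c..x, g u) + C)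
    (hG' : ∀ x ≥ c, G' x = A * G x + B * (∫ u in c..x, G u) + C) : ∀ x ≥ c, g x < G x := by
  have hint : ∀ {f f' : ℝ → ℝ}, (∀ x ≥ c, HasDerivAt f (f' x) x) →
      ∀ x ≥ c, IntervalIntegrable f volume c x := fun hf x hx =>
    (HasDerivAt.continuousOn fun y hy => hf y ((uIcc_of_le hx ▸ hy).1)).intervalIntegrable
  refine fun x hx => sub_pos.1 <| pos_of_le_deriv_add_integral (ζ := fun y => G y - g y)
    (A := A) hB (fun y hy => (hG y hy).sub (hg y hy)) (sub_pos.2 hc) (fun y hy => ?_) x hx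
  show A * (G y - g y) + B * (∫ u in c..y, G u - g u) ≤ G' y - g' y
  rw [integral_sub (hint hG y hy) (hint hg y hy)]
  linear_combination hg' y hy - hG' y hy

lemma exists_roots_le_add_sqrt (A B : ℝ) (hA : 0 ≤ A) (hB : 0 < B) :
    ∃ l₁ l₂ : ℝ, l₁ ≠ l₂ ∧ l₁ ^ 2 = A * l₁ + B ∧ l₂ ^ 2 = A * l₂ + B ∧
      l₁ ≤ A + √B ∧ l₂ ≤ A + √B := by
  set D := √(A ^ 2 + 4 * B)
  have hD2 : D ^ 2 = A ^ 2 + 4 * B := sq_sqrt (by positivity)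
  have hD : 0 < D := sqrt_pos.2 (by positivity)
  have hDle : D ≤ A + 2 * √B := sqrt_le_iff.2
    ⟨by positivity, by nlinarith [sq_sqrt hB.le, sqrt_nonneg B]⟩
  refine ⟨(A + D) / 2, (A - D) / 2, by linarith, by linear_combination hD2 / 4,
    by linear_combination hD2 / 4, by linarith, by linarith⟩

lemma mul_exp_le_abs_mul_exp {a l r t : ℝ} (hlr : l ≤ r) (ht : 0 ≤ t) :
    a * exp (l * t) ≤ |a| * exp (r * t) :=
  (mul_le_mul_of_nonneg_right (le_abs_self a) (exp_pos _).le).trans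
    (mul_le_mul_of_nonneg_left (exp_le_exp.2 (mul_le_mul_of_nonneg_right hlr ht)) (abs_nonneg a))

lemma exists_linearODE_solution (A B c s₀ s₁ : ℝ) (hA : 0 ≤ A) (hB : 0 < B) :
    ∃ y y' : ℝ → ℝ, y c = s₀ ∧ y' c = s₁ ∧ (∀ x, HasDerivAt y (y' x) x) ∧
      (∀ x, HasDerivAt y' (A * y' x + B * y x) x) ∧
      ∃ M ≥ 0, ∀ x ≥ c, y x ≤ M * exp ((A + √B) * x) := by
  obtain ⟨l₁, l₂, hl, hl₁, hl₂, hl₁r, hl₂r⟩ := exists_roots_le_add_sqrt A B hA hB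
  have hl' : l₁ - l₂ ≠ 0 := sub_ne_zero.2 hl
  set a := (s₁ - l₂ * s₀) / (l₁ - l₂)
  set b := (l₁ * s₀ - s₁) / (l₁ - l₂)
  have he : ∀ l x, HasDerivAt (fun x => exp (l * (x - c))) (exp (l * (x - c)) * l) x :=
    fun l x => by simpa using (((hasDerivAt_id x).sub_const c).const_mul l).exp
  refine ⟨fun x => a * exp (l₁ * (x - c)) + b * exp (l₂ * (x - c)),
    fun x => a * l₁ * exp (l₁ * (x - c)) + b * l₂ * exp (l₂ * (x - c)),
    by simp only [a, b, sub_self, mul_zero, exp_zero]; field_simp; ring,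
    by simp only [a, b, sub_self, mul_zero, exp_zero]; field_simp; ring,
    fun x => (((he l₁ x).const_mul a).add ((he l₂ x).const_mul b)).congr_deriv (by ring),
    fun x => (((he l₁ x).const_mul (a * l₁)).add ((he l₂ x).const_mul (b * l₂))).congr_deriv
      (by linear_combination a * exp (l₁ * (x - c)) * hl₁ + b * exp (l₂ * (x - c)) * hl₂),
    (|a| + |b|) * exp (-((A + √B) * c)), by positivity, fun x hx => ?_⟩
  have hx' : 0 ≤ x - c := sub_nonneg.2 hx
  calc a * exp (l₁ * (x - c)) + b * exp (l₂ * (x - c))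
      ≤ |a| * exp ((A + √B) * (x - c)) + |b| * exp ((A + √B) * (x - c)) :=
        add_le_add (mul_exp_le_abs_mul_exp hl₁r hx') (mul_exp_le_abs_mul_exp hl₂r hx')
    _ = (|a| + |b|) * exp (-((A + √B) * c)) * exp ((A + √B) * x) := by
        rw [mul_assoc, ← exp_add]; ring_nf

lemma eq_integral_of_hasDerivAt_linearODE {y y' : ℝ → ℝ} {A B : ℝ}
    (hy : ∀ x, HasDerivAt y (y' x) x) (hy' : ∀ x, HasDerivAt y' (A * y' x + B * y x) x)
    (c x : ℝ) : y' x = A * y x + B * (∫ u in c..x, y u) + (y' c - A * y c) := by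
  have hyc : Continuous y := continuous_iff_continuousAt.2 fun x => (hy x).continuousAt
  have hy'c : Continuous y' := continuous_iff_continuousAt.2 fun x => (hy' x).continuousAt
  have h₁ := integral_eq_sub_of_hasDerivAt (fun u _ => hy' u)
    ((by fun_prop : Continuous fun u => A * y' u + B * y u).intervalIntegrable c x)
  have h₂ := integral_eq_sub_of_hasDerivAt (fun u _ => hy u) (hy'c.intervalIntegrable c x)
  rw [integral_add ((by fun_prop : Continuous fun u => A * y' u).intervalIntegrable c x)
    ((by fun_prop : Continuous fun u => B * y u).intervalIntegrable c x),
    intervalIntegral.integral_const_mul, intervalIntegral.integral_const_mul, h₂] at h₁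
  linear_combination -h₁

lemma deriv_le_add_integral_of_ode {Sig Psi h h' g' : ℝ → ℝ} {θ cb A : ℝ} (hθ : 0 ≤ θ)
    (hSmono : MonotoneOn Sig (Ici cb)) (hSpos : ∀ x ≥ cb, 0 < Sig x)
    (hPsi : ∀ x ≥ cb, -Psi x / Sig x ≤ A) (hh : ∀ x ≥ cb, HasDerivAt h (h' x) x)
    (hh' : ∀ x ≥ cb, 0 ≤ h' x) (hg : ContinuousOn (fun y => Sig y * h' y) (Ici cb))
    (hode : ∀ x ≥ cb, g' x + Psi x * h' x = θ * h x) (x : ℝ) (hx : x ≥ cb) :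
    g' x ≤ A * (Sig x * h' x) + (θ / Sig cb) * (∫ u in cb..x, Sig u * h' u) + θ * h cb := by
  have hdrift : -(Psi x * h' x) ≤ A * (Sig x * h' x) := by
    have := mul_le_mul_of_nonneg_right (hPsi x hx) (mul_nonneg (hSpos x hx).le (hh' x hx))
    rwa [div_mul_eq_mul_div, mul_left_comm, mul_div_cancel_left₀ _ (hSpos x hx).ne',
      neg_mul] at this
  have hgrowth := mul_le_mul_of_nonneg_left (sub_le_integral_mul_div hx hSmono
    (hSpos cb le_rfl) hh hh' (hg.mono Icc_subset_Ici_self)) hθ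
  rw [mul_div, ← div_mul_eq_mul_div] at hgrowth
  linarith [hode x hx]

lemma le_mul_exp_of_deriv_le {f f' : ℝ → ℝ} {c K r : ℝ} (hc : 0 < c) (hK : 0 ≤ K) (hr : 0 < r)
    (hmono : MonotoneOn f (Ioc 0 c)) (hfc : 0 ≤ f c) (hf : ∀ x ≥ c, HasDerivAt f (f' x) x)
    (hf' : ∀ x ≥ c, f' x ≤ K * exp (r * x)) (v : ℝ) (hv : 0 < v) :
    f v ≤ (f c + K / r) * exp (r * v) := by
  have hexp : 1 ≤ exp (r * v) := one_le_exp (by positivity)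
  have hKr : 0 ≤ K / r * exp (r * v) := by positivity
  rcases le_total v c with hvc | hcv
  · nlinarith [hmono ⟨hv, hvc⟩ ⟨hc, le_rfl⟩ hvc]
  · have hbarrier : ∀ x, HasDerivAt (fun x => f c + K / r * exp (r * x)) (K * exp (r * x)) x :=
      fun x => by
        have := ((hasDerivAt_mul_const r).exp.const_mul (K / r)).const_add (f c) (x := x)
        simp only [mul_comm _ r] at this
        exact this.congr_deriv (by field_simp)
    have := image_le_of_deriv_right_le_deriv_boundary
      (HasDerivAt.continuousOn fun x hx => hf x hx.1)
      (fun x hx => (hf x hx.1).hasDerivWithinAt)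
      (by simp only [le_add_iff_nonneg_right]; positivity)
      (HasDerivAt.continuousOn fun x _ => hbarrier x) (fun x _ => (hbarrier x).hasDerivWithinAt)
      (fun x hx => hf' x hx.1) ⟨hcv, le_rfl⟩
    nlinarith

lemma integrableOn_exp_neg_mul_mul_of_le {f : ℝ → ℝ} {C r z : ℝ}
    (hf : AEStronglyMeasurable f (volume.restrict (Ioi 0))) (hnn : ∀ v > 0, 0 ≤ f v)
    (hle : ∀ v > 0, f v ≤ C * exp (r * v)) (hrz : r < z) :
    IntegrableOn (fun v => exp (-z * v) * f v) (Ioi 0) := by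
  refine Integrable.mono' ((exp_neg_integrableOn_Ioi 0 (sub_pos.2 hrz)).const_mul C)
    ((continuous_const.mul continuous_id).rexp.aestronglyMeasurable.mul hf) ?_
  filter_upwards [ae_restrict_mem measurableSet_Ioi] with v (hv : 0 < v)
  rw [Real.norm_eq_abs, abs_of_nonneg (mul_nonneg (exp_pos _).le (hnn v hv))]
  calc exp (-z * v) * f v ≤ exp (-z * v) * (C * exp (r * v)) :=
        mul_le_mul_of_nonneg_left (hle v hv) (exp_pos _).le
    _ = C * exp (-(z - r) * v) := by rw [mul_left_comm, ← exp_add]; ring_nf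

theorem stmt12_general (Sig Psi : ℝ → ℝ) (θ cb : ℝ) (hθ : 0 < θ) (hcb : 0 < cb)
    (hSmono : MonotoneOn Sig (Ici cb))
    (hSpos : ∀ x ≥ cb, 0 < Sig x)
    (hbdd : BddAbove ((fun u => (-Psi u) / Sig u) '' Ici cb))
    (A : ℝ) (hA : A = max (sSup ((fun u => (-Psi u) / Sig u) '' Ici cb)) 0)
    (h h' g' : ℝ → ℝ)
    (hh1 : ∀ x ∈ Ici cb, HasDerivAt h (h' x) x)
    (hmono : MonotoneOn h (Ioi 0)) (hnn : ∀ v > (0:ℝ), 0 ≤ h v)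
    (hg : ∀ x ∈ Ici cb, HasDerivAt (fun y => Sig y * h' y) (g' x) x)
    (hode : ∀ x ≥ cb, g' x + Psi x * h' x = θ * h x) :
    (∀ x ≥ cb, g' x ≤ A * (Sig x * h' x)
      + (θ / Sig cb) * (∫ u in cb..x, Sig u * h' u) + θ * h cb) ∧
    (∃ gt gt' : ℝ → ℝ,
      gt cb = Sig cb * h' cb + 1 ∧
      gt' cb = A * gt cb + θ * h cb ∧
      (∀ x ∈ Ici cb, HasDerivAt gt (gt' x) x) ∧
      (∀ x ∈ Ici cb, HasDerivAt gt' (A * gt' x + (θ / Sig cb) * gt x) x) ∧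
      (∀ x ≥ cb, h' x ≤ (Sig cb)⁻¹ * gt x)) ∧
    (∃ K : ℝ, ∀ x ≥ cb, h' x ≤ K * Real.exp ((A + Real.sqrt (θ / Sig cb)) * x)) ∧
    (∀ z : ℝ, A + Real.sqrt (θ / Sig cb) < z →
      IntegrableOn (fun v => Real.exp (-z*v) * h v) (Ioi 0)) := by
  have hScb : 0 < Sig cb := hSpos cb le_rfl
  have hB : 0 < θ / Sig cb := div_pos hθ hScb
  have hA0 : 0 ≤ A := hA ▸ le_max_right _ _
  have hPsi : ∀ x ≥ cb, -Psi x / Sig x ≤ A :=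
    fun x hx => hA ▸ le_max_of_le_left (le_csSup hbdd ⟨x, hx, rfl⟩)
  have hh' : ∀ x ≥ cb, 0 ≤ h' x := fun x hx => (hh1 x hx).nonneg_of_monotoneOn_Ici
    (hmono.mono fun y hy => hcb.trans_le (hx.trans hy))
  have hg'le := deriv_le_add_integral_of_ode hθ.le hSmono hSpos hPsi hh1 hh'
    (HasDerivAt.continuousOn hg) hode
  obtain ⟨gt, gt', hgt, hgt', hdgt, hdgt', M, hM, hgtM⟩ := exists_linearODE_solution A
    (θ / Sig cb) cb (Sig cb * h' cb + 1) (A * (Sig cb * h' cb + 1) + θ * h cb) hA0 hB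
  have hcomp := lt_of_deriv_le_integral hB.le hg (fun x _ => hdgt x) (by rw [hgt]; linarith)
    hg'le fun x _ => by rw [eq_integral_of_hasDerivAt_linearODE hdgt hdgt' cb x, hgt, hgt']; ring
  have hh'gt : ∀ x ≥ cb, h' x ≤ (Sig cb)⁻¹ * gt x := fun x hx => by
    rw [le_inv_mul_iff₀ hScb]
    exact (mul_le_mul_of_nonneg_right (hSmono self_mem_Ici hx hx) (hh' x hx)).trans (hcomp x hx).le
  have hh'exp : ∀ x ≥ cb, h' x ≤ (Sig cb)⁻¹ * M * exp ((A + √(θ / Sig cb)) * x) :=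
    fun x hx => (hh'gt x hx).trans <| by
      rw [mul_assoc]; exact mul_le_mul_of_nonneg_left (hgtM x hx) (inv_pos.2 hScb).le
  refine ⟨hg'le, ⟨gt, gt', hgt, hgt ▸ hgt', fun x _ => hdgt x, fun x _ => hdgt' x, hh'gt⟩,
    ⟨_, hh'exp⟩, fun z hz => integrableOn_exp_neg_mul_mul_of_le
      (aemeasurable_restrict_of_monotoneOn measurableSet_Ioi hmono).aestronglyMeasurable hnn
      (le_mul_exp_of_deriv_le hcb (by positivity) (by positivity)
        (hmono.mono Ioc_subset_Ioi_self) (hnn cb hcb) hh1 hh'exp) hz⟩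

/-- Comparison argument for `g = Σ h'`: `g' ≤ A g + (θ/Σ(c̄)) ∫ g + θ h(c̄)`, domination of
`h'` by the solution `g̃` of the associated constant-coefficient second order ODE, at most
exponential growth of `h'` with rate `A + √(θ/Σ(c̄))`, and hence finiteness of
`∫₀^∞ e^{−zv} h(v) dv` for every `z > A + √(θ/Σ(c̄))`. -/
theorem stmt12 (Sig Psi : ℝ → ℝ) (θ cb : ℝ) (hθ : 0 < θ) (hcb : 0 < cb)
    (hScont : ContinuousOn Sig (Ici cb)) (hSmono : MonotoneOn Sig (Ici cb))
    (hSpos : ∀ x ≥ cb, 0 < Sig x)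
    (hPcont : ContinuousOn Psi (Ici cb))
    (hbdd : BddAbove ((fun u => (-Psi u) / Sig u) '' Ici cb))
    (A : ℝ) (hA : A = max (sSup ((fun u => (-Psi u) / Sig u) '' Ici cb)) 0)
    (h h' h'' g' : ℝ → ℝ)
    (hh1 : ∀ x ∈ Ici cb, HasDerivAt h (h' x) x)
    (hh2 : ∀ x ∈ Ici cb, HasDerivAt h' (h'' x) x)
    (hmono : MonotoneOn h (Ioi 0)) (hnn : ∀ v > (0:ℝ), 0 ≤ h v)
    (hg : ∀ x ∈ Ici cb, HasDerivAt (fun y => Sig y * h' y) (g' x) x)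
    (hode : ∀ x ≥ cb, g' x + Psi x * h' x = θ * h x) :
    (∀ x ≥ cb, g' x ≤ A * (Sig x * h' x)
      + (θ / Sig cb) * (∫ u in cb..x, Sig u * h' u) + θ * h cb) ∧
    (∃ gt gt' : ℝ → ℝ,
      gt cb = Sig cb * h' cb + 1 ∧
      gt' cb = A * gt cb + θ * h cb ∧
      (∀ x ∈ Ici cb, HasDerivAt gt (gt' x) x) ∧
      (∀ x ∈ Ici cb, HasDerivAt gt' (A * gt' x + (θ / Sig cb) * gt x) x) ∧
      (∀ x ≥ cb, h' x ≤ (Sig cb)⁻¹ * gt x)) ∧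
    (∃ K : ℝ, ∀ x ≥ cb, h' x ≤ K * Real.exp ((A + Real.sqrt (θ / Sig cb)) * x)) ∧
    (∀ z : ℝ, A + Real.sqrt (θ / Sig cb) < z →
      IntegrableOn (fun v => Real.exp (-z*v) * h v) (Ioi 0)) :=
  stmt12_general Sig Psi θ cb hθ hcb hSmono hSpos hbdd A hA h h' g' hh1 hmono hnn hg hode
end
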